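/- With the fully-congested space splits, the two classes travel at the same speed: w₁·(ρ₁ʲ - ρ₁/α₁)/(ρ₁/α₁) = w₂·(ρ₂ʲ - ρ₂/α₂)/(ρ₂/α₂), i.e., the speed derived from each class's triangular fundamental diagram evaluated at its perceived density ρᵢᵖ = ρᵢ/αᵢ is equal across the two classes. -/
import Mathlib

theorem fully_congested_equal_speed (w₁ w₂ ρ₁j ρ₂j ρ₁ ρ₂ : ℝ)
    (hw₁ : 0 < w₁) (hw₂ : 0 < w₂) (hρ₁j : 0 < ρ₁j) (hρ₂j : 0 < ρ₂j)
    (hρ₁ : 0 < ρ₁) (hρ₂ : 0 < ρ₂)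
    (α₁ α₂ : ℝ)
    (hα₁def : α₁ = (w₁ - w₂ + ρ₂j * w₂ / ρ₂) / (ρ₂j * w₂ / ρ₂ + ρ₁j * w₁ / ρ₁))
    (hα₂def : α₂ = (w₂ - w₁ + ρ₁j * w₁ / ρ₁) / (ρ₂j * w₂ / ρ₂ + ρ₁j * w₁ / ρ₁))
    (hα₁ : 0 < α₁) (hα₂ : 0 < α₂) :
    w₁ * (ρ₁j - ρ₁ / α₁) / (ρ₁ / α₁) = w₂ * (ρ₂j - ρ₂ / α₂) / (ρ₂ / α₂) := by
  have hD : ρ₂j * w₂ / ρ₂ + ρ₁j * w₁ / ρ₁ > 0 := by positivity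
  have h1 : w₁ * (ρ₁j - ρ₁ / α₁) / (ρ₁ / α₁) = w₁ * ρ₁j * α₁ / ρ₁ - w₁ := by
    field_simp
  have h2 : w₂ * (ρ₂j - ρ₂ / α₂) / (ρ₂ / α₂) = w₂ * ρ₂j * α₂ / ρ₂ - w₂ := by
    field_simp
  rw [h1, h2, hα₁def, hα₂def]
  field_simp
  ring
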